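/- Let Ω be an uncountable Polish space with σ-finite Borel measure μ, let X be a Köthe function space on (Ω,μ), and let T : X → X be an invertible elementary operator. Then T⁻¹ is elementary, and T can be represented in the form Tf(s) = a(s)·f(σ(s)) a.e., where a is a nonvanishing Borel function and σ : Ω → Ω is an invertible Borel map such that μ(B) > 0 if and only if μ(σ⁻¹(B)) > 0 for every Borel set B. -/

import Mathlib

open MeasureTheory Set Filter Topology

noncomputable section

/-- A Köthe function space on `(Ω, μ)`: a Banach space of (equivalence classes of)
locally integrable Borel functions, represented here at the level of functions.
`Mem f` says that (the class of) `f` belongs to the space, and `normF f` is its norm. -/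
structure KotheSpace (Ω : Type*) [MeasurableSpace Ω] (μ : Measure Ω) where
  Mem : (Ω → ℝ) → Prop
  normF : (Ω → ℝ) → ℝ
  mem_congr : ∀ f g : Ω → ℝ, f =ᵐ[μ] g → Mem f → Mem g
  norm_congr : ∀ f g : Ω → ℝ, f =ᵐ[μ] g → Mem f → normF f = normF g
  measurable_of_mem : ∀ f, Mem f → Measurable f
  integrable_of_mem : ∀ f, Mem f → ∀ A : Set Ω, MeasurableSet A → μ A < ⊤ → IntegrableOn f A μ
  zero_mem : Mem 0
  add_mem : ∀ f g, Mem f → Mem g → Mem (f + g)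
  smul_mem : ∀ (c : ℝ) (f), Mem f → Mem (c • f)
  norm_nonneg' : ∀ f, Mem f → 0 ≤ normF f
  norm_eq_zero_iff : ∀ f, Mem f → (normF f = 0 ↔ f =ᵐ[μ] 0)
  norm_add_le : ∀ f g, Mem f → Mem g → normF (f + g) ≤ normF f + normF g
  norm_smul' : ∀ (c : ℝ) (f), Mem f → normF (c • f) = |c| * normF f
  mem_of_le : ∀ f g, Measurable f → Mem g → (∀ᵐ s ∂μ, |f s| ≤ |g s|) → Mem f
  norm_mono : ∀ f g, Mem f → Mem g → (∀ᵐ s ∂μ, |f s| ≤ |g s|) → normF f ≤ normF g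
  indicator_mem : ∀ A : Set Ω, MeasurableSet A → μ A < ⊤ → Mem (A.indicator fun _ => (1 : ℝ))
  complete' : ∀ f : ℕ → Ω → ℝ, (∀ n, Mem (f n)) →
    (∀ ε : ℝ, 0 < ε → ∃ N : ℕ, ∀ m ≥ N, ∀ n ≥ N, normF (f m - f n) < ε) →
    ∃ g, Mem g ∧ Tendsto (fun n => normF (f n - g)) atTop (nhds 0)

variable {Ω : Type*} [MeasurableSpace Ω] {μ : Measure Ω}

/-- Membership in the Köthe dual `X'`. -/
def KotheSpace.DualMem (X : KotheSpace Ω μ) (g : Ω → ℝ) : Prop :=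
  Measurable g ∧ ∀ f, X.Mem f → Integrable (fun s => |f s| * |g s|) μ

/-- The norm of the Köthe dual `X'`. -/
def KotheSpace.dualNormF (X : KotheSpace Ω μ) (g : Ω → ℝ) : ℝ :=
  sSup {r | ∃ f, X.Mem f ∧ X.normF f ≤ 1 ∧ r = ∫ s, |f s| * |g s| ∂μ}

/-- The Köthe dual `X'` is a norming subspace of `X*`. -/
def KotheSpace.DualNorming (X : KotheSpace Ω μ) : Prop :=
  ∀ f, X.Mem f → X.normF f =
    sSup {r | ∃ g, X.DualMem g ∧ X.dualNormF g ≤ 1 ∧ r = ∫ s, f s * g s ∂μ}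

/-- `X` is order-continuous: if `fₙ ↓ 0` a.e. then `‖fₙ‖ ↓ 0`. -/
def KotheSpace.OrderCont (X : KotheSpace Ω μ) : Prop :=
  ∀ f : ℕ → Ω → ℝ, (∀ n, X.Mem (f n)) →
    (∀ᵐ s ∂μ, Antitone (fun n => f n s) ∧ Tendsto (fun n => f n s) atTop (nhds 0)) →
    Tendsto (fun n => X.normF (f n)) atTop (nhds 0)

/-- `X` has the Fatou property: if `0 ≤ fₙ ↑ g` a.e. with `sup ‖fₙ‖ < ∞`,
then `g ∈ X` and `‖g‖ = sup ‖fₙ‖`. -/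
def KotheSpace.Fatou (X : KotheSpace Ω μ) : Prop :=
  ∀ (f : ℕ → Ω → ℝ) (g : Ω → ℝ), (∀ n, X.Mem (f n)) → Measurable g →
    (∀ᵐ s ∂μ, Monotone (fun n => f n s) ∧ 0 ≤ f 0 s ∧
      Tendsto (fun n => f n s) atTop (nhds (g s))) →
    BddAbove (Set.range fun n => X.normF (f n)) →
    X.Mem g ∧ X.normF g = ⨆ n, X.normF (f n)

/-- A linear map between Köthe function spaces, given at the level of functions. -/
structure KotheOp {Ω₁ : Type*} [MeasurableSpace Ω₁] {μ₁ : Measure Ω₁}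
    {Ω₂ : Type*} [MeasurableSpace Ω₂] {μ₂ : Measure Ω₂}
    (X : KotheSpace Ω₁ μ₁) (Y : KotheSpace Ω₂ μ₂) where
  toFun : (Ω₁ → ℝ) → Ω₂ → ℝ
  mem_map : ∀ f, X.Mem f → Y.Mem (toFun f)
  congr_map : ∀ f g, X.Mem f → X.Mem g → f =ᵐ[μ₁] g → toFun f =ᵐ[μ₂] toFun g
  add_map : ∀ f g, X.Mem f → X.Mem g → toFun (f + g) =ᵐ[μ₂] toFun f + toFun g
  smul_map : ∀ (c : ℝ) (f), X.Mem f → toFun (c • f) =ᵐ[μ₂] c • toFun f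

namespace KotheOp

variable {Ω₁ : Type*} [MeasurableSpace Ω₁] {μ₁ : Measure Ω₁}
  {Ω₂ : Type*} [MeasurableSpace Ω₂] {μ₂ : Measure Ω₂}
  {X : KotheSpace Ω₁ μ₁} {Y : KotheSpace Ω₂ μ₂}

/-- `T` is an isometry. -/
def Isometric (T : KotheOp X Y) : Prop :=
  ∀ f, X.Mem f → Y.normF (T.toFun f) = X.normF f

/-- `T` is surjective (onto `Y`). -/
def Surj (T : KotheOp X Y) : Prop :=
  ∀ g, Y.Mem g → ∃ f, X.Mem f ∧ T.toFun f =ᵐ[μ₂] g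

/-- `T` is a bounded operator. -/
def Bounded (T : KotheOp X Y) : Prop :=
  ∃ C : ℝ, ∀ f, X.Mem f → Y.normF (T.toFun f) ≤ C * X.normF f

/-- `T` is elementary: `Tf(s) = a(s)·f(σ(s))` a.e. for a Borel function `a` and
a Borel map `σ`. -/
def Elementary (T : KotheOp X Y) : Prop :=
  ∃ (a : Ω₂ → ℝ) (σ : Ω₂ → Ω₁), Measurable a ∧ Measurable σ ∧
    ∀ f, X.Mem f → T.toFun f =ᵐ[μ₂] fun s => a s * f (σ s)

/-- `T` is disjointness-preserving. -/
def DisjPres (T : KotheOp X Y) : Prop :=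
  ∀ f g, X.Mem f → X.Mem g → (∀ᵐ s ∂μ₁, min |f s| |g s| = 0) →
    ∀ᵐ s ∂μ₂, min |T.toFun f s| |T.toFun g s| = 0

/-- `T` is `σ(X,X')`-continuous; equivalently the adjoint `T*` maps the Köthe dual `Y'`
into the Köthe dual `X'`. -/
def WeakCont (T : KotheOp X Y) : Prop :=
  ∀ g, Y.DualMem g → ∃ g', X.DualMem g' ∧
    ∀ f, X.Mem f → ∫ s, T.toFun f s * g s ∂μ₂ = ∫ s, f s * g' s ∂μ₁

end KotheOp

/-- The unit interval `[0,1]`. -/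
abbrev UI : Type := Set.Icc (0 : ℝ) 1

/-- Lebesgue measure on `[0,1]`. -/
def lambdaI : Measure UI := Measure.comap Subtype.val volume

/-- A rearrangement-invariant function space on `[0,1]`. -/
structure RISpace extends KotheSpace UI lambdaI where
  oc_or_fatou : toKotheSpace.OrderCont ∨ toKotheSpace.Fatou
  rearr_inv : ∀ τ : UI → UI, Measurable τ →
    (∃ τ' : UI → UI, Measurable τ' ∧ (∀ t, τ' (τ t) = t) ∧ ∀ t, τ (τ' t) = t) →
    MeasurePreserving τ lambdaI lambdaI →
    ∀ f : UI → ℝ, (toKotheSpace.Mem f ↔ toKotheSpace.Mem (f ∘ τ)) ∧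
      (toKotheSpace.Mem f → toKotheSpace.normF (f ∘ τ) = toKotheSpace.normF f)
  norm_one : toKotheSpace.normF (fun _ => 1) = 1

/-- The dyadic step function `e^N_i = χ_{((i-1)2^{-N}, i 2^{-N}]}` on `[0,1]`. -/
def dyadE (N i : ℕ) : UI → ℝ :=
  Set.indicator {t : UI | ((i : ℝ) - 1) / 2 ^ N < (t : ℝ) ∧ (t : ℝ) ≤ (i : ℝ) / 2 ^ N}
    fun _ => (1 : ℝ)

/-- `X` is isometrically equal to `L₂[0,1]`. -/
def RISpace.eqL2 (X : RISpace) : Prop :=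
  ∀ f, X.Mem f → X.normF f = Real.sqrt (∫ s, (f s) ^ 2 ∂lambdaI)

/-- Property (P): `‖e¹₁‖ < ‖e¹₁ + t e¹₂‖` for all `t > 0`. -/
def RISpace.PropP (X : RISpace) : Prop :=
  ∀ t : ℝ, 0 < t → X.normF (dyadE 1 1) < X.normF (dyadE 1 1 + t • dyadE 1 2)

/-- Property (P'): the Köthe dual `X'` has property (P). -/
def RISpace.PropP' (X : RISpace) : Prop :=
  ∀ t : ℝ, 0 < t → X.dualNormF (dyadE 1 1) < X.dualNormF (dyadE 1 1 + t • dyadE 1 2)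


/-- Lemma 2.3: if `Ω` is an uncountable Polish space with σ-finite Borel measure `μ`,
`X` a Köthe function space on `(Ω, μ)`, and `T : X → X` an invertible elementary
operator (with inverse `S`), then `T⁻¹` is elementary and `T` can be represented as
`Tf(s) = a(s)·f(σ(s))` a.e. with `a` a nonvanishing Borel function and `σ` an
invertible Borel map such that `μ(B) > 0 ↔ μ(σ⁻¹ B) > 0` for all Borel `B`. -/
theorem stmt17 {Ω : Type*} [TopologicalSpace Ω] [PolishSpace Ω] [Uncountable Ω]
    [MeasurableSpace Ω] [BorelSpace Ω] (μ : Measure Ω) [SigmaFinite μ]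
    (X : KotheSpace Ω μ) (T S : KotheOp X X)
    (hT : T.Bounded) (hS : S.Bounded) (hTel : T.Elementary)
    (hST : ∀ f, X.Mem f → S.toFun (T.toFun f) =ᵐ[μ] f)
    (hTS : ∀ f, X.Mem f → T.toFun (S.toFun f) =ᵐ[μ] f) :
    S.Elementary ∧
      ∃ (a : Ω → ℝ) (σ : Ω → Ω), Measurable a ∧ (∀ s, a s ≠ 0) ∧ Measurable σ ∧
        (∃ σ' : Ω → Ω, Measurable σ' ∧ (∀ t, σ' (σ t) = t) ∧ ∀ t, σ (σ' t) = t) ∧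
        (∀ B : Set Ω, MeasurableSet B → (0 < μ B ↔ 0 < μ (σ ⁻¹' B))) ∧
        ∀ f, X.Mem f → T.toFun f =ᵐ[μ] fun s => a s * f (σ s) := by
  classical
  obtain ⟨a₀, σ₀, ha₀, hσ₀, hrep⟩ := hTel
  -- `T 0 = 0` a.e.
  have hT0 : T.toFun 0 =ᵐ[μ] 0 := by
    have h := T.smul_map 0 0 X.zero_mem
    simpa [zero_smul] using h
  -- the coefficient `a₀` is a.e. nonzero
  have haA : μ {s | a₀ s = 0} = 0 := by
    have hAn : ∀ n, μ ({s | a₀ s = 0} ∩ spanningSets μ n) = 0 := by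
      intro n
      set B := {s | a₀ s = 0} ∩ spanningSets μ n with hBdef
      have hB_meas : MeasurableSet B :=
        (ha₀ (measurableSet_singleton 0)).inter (measurableSet_spanningSets μ n)
      have hB_fin : μ B < ⊤ :=
        lt_of_le_of_lt (measure_mono inter_subset_right) (measure_spanningSets_lt_top μ n)
      set g := B.indicator (fun _ => (1:ℝ)) with hgdef
      have hg : X.Mem g := X.indicator_mem B hB_meas hB_fin
      have h1 := hTS g hg
      have h2 := hrep (S.toFun g) (S.mem_map g hg)
      have h3 : ∀ᵐ s ∂μ, g s = a₀ s * (S.toFun g) (σ₀ s) := h1.symm.trans h2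
      refine measure_mono_null ?_ (ae_iff.mp h3)
      intro s hs
      simp only [mem_setOf_eq]
      have hg1 : g s = 1 := by rw [hgdef]; exact Set.indicator_of_mem hs _
      have ha0 : a₀ s = 0 := hs.1
      rw [hg1, ha0, zero_mul]
      norm_num
    have hAeq : {s | a₀ s = 0} = ⋃ n, {s | a₀ s = 0} ∩ spanningSets μ n := by
      rw [← inter_iUnion, iUnion_spanningSets, inter_univ]
    rw [hAeq]
    exact measure_iUnion_null hAn
  have ha_ne : ∀ᵐ s ∂μ, a₀ s ≠ 0 := by
    rw [ae_iff]
    simpa [not_not] using haA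
  -- null sets transfer along σ₀, forward direction
  have hdir1 : ∀ B : Set Ω, MeasurableSet B → μ B = 0 → μ (σ₀ ⁻¹' B) = 0 := by
    intro B hB hB0
    set f := B.indicator (fun _ => (1:ℝ)) with hfdef
    have hf_meas : Measurable f := measurable_const.indicator hB
    have hae : ∀ᵐ s ∂μ, s ∉ B := by
      rw [ae_iff]; simpa [not_not] using hB0
    have hf0 : f =ᵐ[μ] 0 := by
      filter_upwards [hae] with s hs
      rw [hfdef]
      simp [Set.indicator_of_notMem hs]
    have hmem : X.Mem f := by
      refine X.mem_of_le f 0 hf_meas X.zero_mem ?_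
      filter_upwards [hf0] with s hs
      simp [hs]
    have h2 := hrep f hmem
    have h1 : T.toFun f =ᵐ[μ] 0 := (T.congr_map f 0 hmem X.zero_mem hf0).trans hT0
    have h3 : ∀ᵐ s ∂μ, a₀ s * f (σ₀ s) = 0 := h2.symm.trans h1
    have h4 : ∀ᵐ s ∂μ, f (σ₀ s) = 0 := by
      filter_upwards [h3, ha_ne] with s h3s hnes
      rcases mul_eq_zero.mp h3s with h | h
      · exact absurd h hnes
      · exact h
    refine measure_mono_null ?_ (ae_iff.mp h4)
    intro s hs
    simp only [mem_setOf_eq]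
    have hs' : σ₀ s ∈ B := hs
    have : f (σ₀ s) = 1 := by rw [hfdef]; exact Set.indicator_of_mem hs' _
    rw [this]; norm_num
  -- null sets transfer along σ₀, backward direction
  have hdir2 : ∀ B : Set Ω, MeasurableSet B → μ (σ₀ ⁻¹' B) = 0 → μ B = 0 := by
    intro B hB hB0
    have key : ∀ n, μ (B ∩ spanningSets μ n) = 0 := by
      intro n
      set C := B ∩ spanningSets μ n with hCdef
      have hC_meas : MeasurableSet C := hB.inter (measurableSet_spanningSets μ n)
      have hC_fin : μ C < ⊤ :=
        lt_of_le_of_lt (measure_mono inter_subset_right) (measure_spanningSets_lt_top μ n)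
      set f := C.indicator (fun _ => (1:ℝ)) with hfdef
      have hmem : X.Mem f := X.indicator_mem C hC_meas hC_fin
      have h2 := hrep f hmem
      have hpre : μ (σ₀ ⁻¹' C) = 0 :=
        measure_mono_null (preimage_mono inter_subset_left) hB0
      have hae : ∀ᵐ s ∂μ, σ₀ s ∉ C := by
        rw [ae_iff]; simp only [not_not]; exact hpre
      have h3 : T.toFun f =ᵐ[μ] 0 := by
        refine h2.trans ?_
        filter_upwards [hae] with s hs
        rw [hfdef]
        simp [Set.indicator_of_notMem hs]
      have h4 : T.toFun f =ᵐ[μ] T.toFun 0 := h3.trans hT0.symm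
      have h5 : S.toFun (T.toFun f) =ᵐ[μ] S.toFun (T.toFun 0) :=
        S.congr_map _ _ (T.mem_map f hmem) (T.mem_map 0 X.zero_mem) h4
      have h6 : f =ᵐ[μ] 0 := (hST f hmem).symm.trans (h5.trans (hST 0 X.zero_mem))
      refine measure_mono_null ?_ (ae_iff.mp h6)
      intro s hs
      simp only [mem_setOf_eq]
      have : f s = 1 := by rw [hfdef]; exact Set.indicator_of_mem hs _
      rw [this]
      simp
    have hBeq : B = ⋃ n, B ∩ spanningSets μ n := by
      rw [← inter_iUnion, iUnion_spanningSets, inter_univ]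
    rw [hBeq]
    exact measure_iUnion_null key
  -- a Borel isomorphism with ℝ and a bounded injective Borel function
  have hΩnc : ¬Countable Ω := not_countable
  have hℝnc : ¬Countable ℝ := not_countable
  set e : Ω ≃ᵐ ℝ := PolishSpace.measurableEquivOfNotCountable hΩnc hℝnc with hedef
  set φ : Ω → ℝ := fun s => Real.arctan (e s) with hφdef
  have hφ_meas : Measurable φ := Real.continuous_arctan.measurable.comp e.measurable
  have hφ_lt : ∀ s, |φ s| < 2 := by
    intro s
    have h1 := Real.arctan_lt_pi_div_two (e s)
    have h2 := Real.neg_pi_div_two_lt_arctan (e s)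
    have hπ : Real.pi < 3.15 := Real.pi_lt_d2
    rw [hφdef, abs_lt]
    constructor <;> nlinarith
  -- exhausting sets
  set G : ℕ → Set Ω := fun n => spanningSets μ n ∩ {s | |a₀ s| ≤ (n:ℝ)} with hGdef
  have hG_meas : ∀ n, MeasurableSet (G n) := fun n =>
    (measurableSet_spanningSets μ n).inter (measurableSet_le ha₀.abs measurable_const)
  have hG_total : ∀ s, ∃ N, ∀ n, N ≤ n → s ∈ G n := by
    intro s
    obtain ⟨k, hk⟩ : ∃ k, s ∈ spanningSets μ k := by
      have h1 : s ∈ ⋃ i, spanningSets μ i := by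
        rw [iUnion_spanningSets]; trivial
      exact mem_iUnion.mp h1
    refine ⟨max k ⌈|a₀ s|⌉₊, fun n hn => ⟨monotone_spanningSets μ (le_trans (le_max_left _ _) hn) hk, ?_⟩⟩
    simp only [mem_setOf_eq]
    calc |a₀ s| ≤ (⌈|a₀ s|⌉₊ : ℝ) := Nat.le_ceil _
      _ ≤ (n : ℝ) := by exact_mod_cast le_trans (le_max_right _ _) hn
  -- truncated test functions
  set h : ℕ → Ω → ℝ := fun n => (G n).indicator (fun s => a₀ s * φ s) with hhdef
  have hh_meas : ∀ n, Measurable (h n) := fun n => (ha₀.mul hφ_meas).indicator (hG_meas n)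
  have hh_mem : ∀ n, X.Mem (h n) := by
    intro n
    have hind := X.indicator_mem (spanningSets μ n) (measurableSet_spanningSets μ n)
      (measure_spanningSets_lt_top μ n)
    have hg := X.smul_mem (2 * (n:ℝ)) _ hind
    refine X.mem_of_le _ _ (hh_meas n) hg (Eventually.of_forall fun s => ?_)
    by_cases hs : s ∈ G n
    · have h4 : ((2 * (n:ℝ)) • (spanningSets μ n).indicator (fun _ => (1:ℝ))) s = 2 * (n:ℝ) := by
        simp [Set.indicator_of_mem hs.1]
      rw [hhdef]
      simp only [Set.indicator_of_mem hs]
      rw [h4, abs_of_nonneg (by positivity : (0:ℝ) ≤ 2 * (n:ℝ)), abs_mul]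
      calc |a₀ s| * |φ s| ≤ (n:ℝ) * 2 :=
            mul_le_mul hs.2 (hφ_lt s).le (abs_nonneg _) (Nat.cast_nonneg n)
        _ = 2 * (n:ℝ) := by ring
    · rw [hhdef]
      simp only [Set.indicator_of_notMem hs]
      simpa using abs_nonneg (((2 * (n:ℝ)) • (spanningSets μ n).indicator (fun _ => (1:ℝ))) s)
  set fS : ℕ → Ω → ℝ := fun n => S.toFun (h n) with hfSdef
  have hfS_mem : ∀ n, X.Mem (fS n) := fun n => S.mem_map _ (hh_mem n)
  have hfS_meas : ∀ n, Measurable (fS n) := fun n => X.measurable_of_mem _ (hfS_mem n)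
  have key : ∀ n, ∀ᵐ s ∂μ, a₀ s * fS n (σ₀ s) = h n s := by
    intro n
    have h1 := hTS (h n) (hh_mem n)
    have h2 := hrep (fS n) (hfS_mem n)
    exact h2.symm.trans h1
  -- clipped versions
  set c : ℕ → Ω → ℝ := fun n t => max (-2) (min 2 (fS n t)) with hcdef
  have hc_meas : ∀ n, Measurable (c n) := fun n =>
    measurable_const.max (measurable_const.min (hfS_meas n))
  have hkey2 : ∀ n, ∀ᵐ s ∂μ, s ∈ G n → c n (σ₀ s) = φ s := by
    intro n
    filter_upwards [key n, ha_ne] with s h1 h2 hs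
    have h3 : a₀ s * fS n (σ₀ s) = a₀ s * φ s := by
      rw [h1, hhdef]
      simp [Set.indicator_of_mem hs]
    have h4 : fS n (σ₀ s) = φ s := mul_left_cancel₀ h2 h3
    have h5 := abs_lt.mp (hφ_lt s)
    rw [hcdef]
    simp only []
    rw [h4, min_eq_right h5.2.le, max_eq_right (by linarith)]
  -- the limit function
  set r : Ω → ℝ := fun t => (⨅ n : ℕ, ⨆ m : ℕ, ENNReal.ofReal (c (n + m) t + 2)).toReal - 2
    with hrdef
  have hr_meas : Measurable r := by
    refine Measurable.sub ?_ measurable_const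
    refine Measurable.ennreal_toReal ?_
    exact Measurable.iInf fun n => Measurable.iSup fun m =>
      ((hc_meas (n + m)).add measurable_const).ennreal_ofReal
  have hru : ∀ᵐ s ∂μ, r (σ₀ s) = φ s := by
    have hall : ∀ᵐ s ∂μ, ∀ n, s ∈ G n → c n (σ₀ s) = φ s := ae_all_iff.mpr hkey2
    filter_upwards [hall] with s hs
    obtain ⟨N, hN⟩ := hG_total s
    have hval : ∀ k, N ≤ k → c k (σ₀ s) = φ s := fun k hk => hs k (hN k hk)
    have hiinf : (⨅ n : ℕ, ⨆ m : ℕ, ENNReal.ofReal (c (n + m) (σ₀ s) + 2))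
        = ENNReal.ofReal (φ s + 2) := by
      apply le_antisymm
      · refine iInf_le_of_le N (le_of_eq ?_)
        have heq : ∀ m : ℕ, ENNReal.ofReal (c (N + m) (σ₀ s) + 2) = ENNReal.ofReal (φ s + 2) :=
          fun m => by rw [hval (N + m) (Nat.le_add_right N m)]
        simp only [heq, iSup_const]
      · refine le_iInf fun n => ?_
        have heq : ENNReal.ofReal (φ s + 2) = ENNReal.ofReal (c (n + N) (σ₀ s) + 2) := by
          rw [hval (n + N) (Nat.le_add_left N n)]
        rw [heq]
        exact le_iSup (fun m => ENNReal.ofReal (c (n + m) (σ₀ s) + 2)) N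
    have hφpos : 0 ≤ φ s + 2 := by linarith [(abs_lt.mp (hφ_lt s)).1]
    rw [hrdef]
    simp only []
    rw [hiinf, ENNReal.toReal_ofReal hφpos]
    ring
  -- the essential inverse `u`
  have htan_meas : Measurable Real.tan := by
    have heq : Real.tan = fun x => Real.sin x / Real.cos x := funext Real.tan_eq_sin_div_cos
    rw [heq]
    exact Real.measurable_sin.div Real.measurable_cos
  set u : Ω → Ω := fun t => e.symm (Real.tan (r t)) with hudef
  have hu_meas : Measurable u := e.symm.measurable.comp (htan_meas.comp hr_meas)
  have hu : ∀ᵐ s ∂μ, u (σ₀ s) = s := by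
    filter_upwards [hru] with s hs
    rw [hudef]
    simp only []
    rw [hs, hφdef]
    simp only []
    rw [Real.tan_arctan, e.symm_apply_apply]
  set P : Set Ω := {s | u (σ₀ s) = s} with hPdef
  have hP_meas : MeasurableSet P :=
    (show Measurable fun s => u (σ₀ s) from hu_meas.comp hσ₀).stronglyMeasurable.measurableSet_eq_fun
      measurable_id.stronglyMeasurable
  have hPc : μ Pᶜ = 0 := by
    have := ae_iff.mp hu
    simpa [hPdef, Set.compl_setOf] using this
  set R : Set Ω := {t | σ₀ (u t) = t} with hRdef
  have hR_meas : MeasurableSet R :=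
    (show Measurable fun t => σ₀ (u t) from hσ₀.comp hu_meas).stronglyMeasurable.measurableSet_eq_fun
      measurable_id.stronglyMeasurable
  have hRc : μ Rᶜ = 0 := by
    refine hdir2 _ hR_meas.compl ?_
    refine measure_mono_null ?_ hPc
    intro s hs
    simp only [mem_preimage, mem_compl_iff, hRdef, mem_setOf_eq] at hs
    simp only [mem_compl_iff, hPdef, mem_setOf_eq]
    intro hsP
    exact hs (by rw [hsP])
  have hu_null : ∀ B : Set Ω, MeasurableSet B → μ B = 0 → μ (u ⁻¹' B) = 0 := by
    intro B hB hB0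
    refine hdir2 _ (hu_meas hB) ?_
    refine measure_mono_null (?_ : σ₀ ⁻¹' (u ⁻¹' B) ⊆ B ∪ Pᶜ) (measure_union_null hB0 hPc)
    intro s hs
    by_cases hsP : s ∈ P
    · left
      have heq : u (σ₀ s) = s := hsP
      simp only [mem_preimage] at hs
      rwa [heq] at hs
    · right; exact hsP
  have huR_P : ∀ t, t ∈ R → u t ∈ P := by
    intro t ht
    have heq : σ₀ (u t) = t := ht
    show u (σ₀ (u t)) = u t
    rw [heq]
  -- S is elementary
  have hSel : S.Elementary := by
    refine ⟨fun t => (a₀ (u t))⁻¹, u, (ha₀.comp hu_meas).inv, hu_meas, ?_⟩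
    intro g hg
    have hf_mem : X.Mem (S.toFun g) := S.mem_map g hg
    have hf_meas : Measurable (S.toFun g) := X.measurable_of_mem _ hf_mem
    have hg_meas : Measurable g := X.measurable_of_mem g hg
    have hA : ∀ᵐ s ∂μ, a₀ s * (S.toFun g) (σ₀ s) = g s := (hrep _ hf_mem).symm.trans (hTS g hg)
    set A : Set Ω := {s | a₀ s * (S.toFun g) (σ₀ s) = g s ∧ a₀ s ≠ 0} with hAdef
    have hA_meas : MeasurableSet A := by
      refine MeasurableSet.inter ?_ ?_
      · exact (show Measurable fun s => a₀ s * (S.toFun g) (σ₀ s) from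
            ha₀.mul (hf_meas.comp hσ₀)).stronglyMeasurable.measurableSet_eq_fun
          hg_meas.stronglyMeasurable
      · exact (ha₀ (measurableSet_singleton 0)).compl
    have hAc : μ Aᶜ = 0 := by
      have hin : ∀ᵐ s ∂μ, s ∈ A := by
        filter_upwards [hA, ha_ne] with s h1 h2
        exact ⟨h1, h2⟩
      have := ae_iff.mp hin
      simpa [Set.compl_def] using this
    have hu_pre : μ (u ⁻¹' Aᶜ) = 0 := hu_null Aᶜ hA_meas.compl hAc
    have hfin : ∀ᵐ t ∂μ, t ∈ R ∧ u t ∈ A := by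
      rw [ae_iff]
      refine measure_mono_null ?_ (measure_union_null hRc hu_pre)
      intro t ht
      simp only [mem_setOf_eq, not_and_or] at ht
      rcases ht with h | h
      · left; exact h
      · right; exact h
    filter_upwards [hfin] with t htt
    obtain ⟨htR, htA⟩ := htt
    obtain ⟨h1, h2⟩ := htA
    have h3 : σ₀ (u t) = t := htR
    rw [h3] at h1
    show S.toFun g t = (a₀ (u t))⁻¹ * g (u t)
    rw [← h1, inv_mul_cancel_left₀ h2]
  -- an uncountable null set
  have hℝ2nc : ¬Countable (ℝ × ℝ) := by
    intro hcnt
    exact hℝnc (Function.Injective.countable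
      (f := fun x : ℝ => ((x, 0) : ℝ × ℝ)) (fun x y hxy => congrArg Prod.fst hxy))
  set g2 : Ω ≃ᵐ ℝ × ℝ := PolishSpace.measurableEquivOfNotCountable hΩnc hℝ2nc with hg2def
  set As : ℝ → Set Ω := fun x => (fun ω => (g2 ω).1) ⁻¹' {x} with hAsdef
  have hAs_meas : ∀ x, MeasurableSet (As x) := fun x =>
    (measurable_fst.comp g2.measurable) (measurableSet_singleton x)
  have hAs_disj : Pairwise (Function.onFun Disjoint As) := by
    intro x y hxy
    simp only [Function.onFun]
    rw [Set.disjoint_left]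
    intro ω h1 h2
    simp only [hAsdef, mem_preimage, mem_singleton_iff] at h1 h2
    exact hxy (h1.symm.trans h2)
  have hcnt := MeasureTheory.Measure.countable_meas_pos_of_disjoint_iUnion
    (μ := μ) hAs_meas hAs_disj
  obtain ⟨x₀, hx₀⟩ : ∃ x : ℝ, ¬ 0 < μ (As x) := by
    by_contra hcon
    push_neg at hcon
    have huniv : {x : ℝ | 0 < μ (As x)} = univ := eq_univ_of_forall hcon
    rw [huniv] at hcnt
    exact hℝnc (Set.countable_univ_iff.mp hcnt)
  set Z : Set Ω := As x₀ with hZdef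
  have hZ0 : μ Z = 0 := by
    have := not_lt.mp hx₀
    exact le_antisymm this zero_le
  have hZ_meas : MeasurableSet Z := hAs_meas x₀
  have hZ_unc : ¬Countable ↥Z := by
    intro hcntZ
    have hmemZ : ∀ y : ℝ, g2.symm (x₀, y) ∈ Z := by
      intro y
      simp only [hZdef, hAsdef, mem_preimage, mem_singleton_iff, MeasurableEquiv.apply_symm_apply]
    have hinj : Function.Injective (fun y : ℝ => (⟨g2.symm (x₀, y), hmemZ y⟩ : ↥Z)) := by
      intro y1 y2 hy
      have hy' : g2.symm (x₀, y1) = g2.symm (x₀, y2) := congrArg Subtype.val hy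
      have hy'' : ((x₀, y1) : ℝ × ℝ) = (x₀, y2) := g2.symm.toEquiv.injective hy'
      exact (Prod.mk.injEq _ _ _ _ ▸ hy'').2
    exact hℝnc (Function.Injective.countable hinj)
  -- the exceptional sets
  set N : Set Ω := Pᶜ ∪ Z ∪ (P ∩ σ₀ ⁻¹' Z) with hNdef
  have hN_meas : MeasurableSet N :=
    (hP_meas.compl.union hZ_meas).union (hP_meas.inter (hσ₀ hZ_meas))
  have hN0 : μ N = 0 := by
    refine measure_union_null (measure_union_null hPc hZ0) ?_
    exact measure_mono_null inter_subset_right (hdir1 Z hZ_meas hZ0)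
  set N' : Set Ω := Rᶜ ∪ (R ∩ u ⁻¹' N) with hN'def
  have hN'_meas : MeasurableSet N' := hR_meas.compl.union (hR_meas.inter (hu_meas hN_meas))
  have hN'0 : μ N' = 0 :=
    measure_union_null hRc (measure_mono_null inter_subset_right (hu_null N hN_meas hN0))
  have hZN : Z ⊆ N := fun z hz => Or.inl (Or.inr hz)
  have hPcN : Pᶜ ⊆ N := fun z hz => Or.inl (Or.inl hz)
  have hZN' : Z ⊆ N' := by
    intro t ht
    by_cases htR : t ∈ R
    · right
      refine ⟨htR, ?_⟩
      show u t ∈ N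
      right
      refine ⟨huR_P t htR, ?_⟩
      show σ₀ (u t) ∈ Z
      have heq : σ₀ (u t) = t := htR
      rwa [heq]
    · left; exact htR
  have fact1 : ∀ s, s ∉ N → s ∈ P ∧ σ₀ s ∉ N' ∧ u (σ₀ s) = s := by
    intro s hs
    have hsP : s ∈ P := by
      by_contra hc
      exact hs (hPcN hc)
    have heq : u (σ₀ s) = s := hsP
    refine ⟨hsP, ?_, heq⟩
    intro hcon
    rcases hcon with hbad | hbad
    · refine hbad ?_
      show σ₀ (u (σ₀ s)) = σ₀ s
      rw [heq]
    · refine hs ?_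
      have : u (σ₀ s) ∈ N := hbad.2
      rwa [heq] at this
  have fact2 : ∀ t, t ∉ N' → t ∈ R ∧ u t ∉ N ∧ σ₀ (u t) = t := by
    intro t ht
    have htR : t ∈ R := by
      by_contra hc
      exact ht (Or.inl hc)
    refine ⟨htR, ?_, htR⟩
    intro hc
    exact ht (Or.inr ⟨htR, hc⟩)
  have hN_unc : ¬Countable ↥N := fun hc =>
    hZ_unc ((Set.inclusion_injective hZN).countable)
  have hN'_unc : ¬Countable ↥N' := fun hc =>
    hZ_unc ((Set.inclusion_injective hZN').countable)
  haveI hsb1 : StandardBorelSpace ↥N := hN_meas.standardBorel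
  haveI hsb2 : StandardBorelSpace ↥N' := hN'_meas.standardBorel
  set w : ↥N ≃ᵐ ↥N' := PolishSpace.measurableEquivOfNotCountable hN_unc hN'_unc with hwdef
  -- the corrected bijection
  set σt : Ω → Ω := fun s => if hs : s ∈ N then (w ⟨s, hs⟩ : Ω) else σ₀ s with hσtdef
  set σt' : Ω → Ω := fun t => if ht : t ∈ N' then (w.symm ⟨t, ht⟩ : Ω) else u t with hσt'def
  have hσt_meas : Measurable σt := by
    rw [hσtdef]
    exact Measurable.dite (measurable_subtype_coe.comp w.measurable)
      (hσ₀.comp measurable_subtype_coe) hN_meas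
  have hσt'_meas : Measurable σt' := by
    rw [hσt'def]
    exact Measurable.dite (measurable_subtype_coe.comp w.symm.measurable)
      (hu_meas.comp measurable_subtype_coe) hN'_meas
  have hagree : ∀ s, s ∉ N → σt s = σ₀ s := by
    intro s hs
    rw [hσtdef]
    simp only []
    rw [dif_neg hs]
  have hinv1 : ∀ s, σt' (σt s) = s := by
    intro s
    by_cases hs : s ∈ N
    · have hstep : σt s = (w ⟨s, hs⟩ : Ω) := by
        rw [hσtdef]; simp only []; rw [dif_pos hs]
      have h1 : (w ⟨s, hs⟩ : Ω) ∈ N' := (w ⟨s, hs⟩).2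
      rw [hstep, hσt'def]
      simp only []
      rw [dif_pos h1, Subtype.coe_eta, w.symm_apply_apply]
    · obtain ⟨hsP, hσN', heq⟩ := fact1 s hs
      rw [hagree s hs, hσt'def]
      simp only []
      rw [dif_neg hσN']
      exact heq
  have hinv2 : ∀ t, σt (σt' t) = t := by
    intro t
    by_cases ht : t ∈ N'
    · have hstep : σt' t = (w.symm ⟨t, ht⟩ : Ω) := by
        rw [hσt'def]; simp only []; rw [dif_pos ht]
      have h1 : (w.symm ⟨t, ht⟩ : Ω) ∈ N := (w.symm ⟨t, ht⟩).2
      rw [hstep, hσtdef]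
      simp only []
      rw [dif_pos h1, Subtype.coe_eta, w.apply_symm_apply]
    · obtain ⟨htR, hutN, heq⟩ := fact2 t ht
      have hstep : σt' t = u t := by
        rw [hσt'def]; simp only []; rw [dif_neg ht]
      rw [hstep, hagree _ hutN]
      exact heq
  -- measure equivalence
  have hpre_eq : ∀ B : Set Ω, μ (σt ⁻¹' B) = 0 ↔ μ (σ₀ ⁻¹' B) = 0 := by
    intro B
    constructor
    · intro h0
      refine measure_mono_null (?_ : σ₀ ⁻¹' B ⊆ σt ⁻¹' B ∪ N) (measure_union_null h0 hN0)
      intro s hs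
      by_cases hsN : s ∈ N
      · exact Or.inr hsN
      · left
        show σt s ∈ B
        rwa [hagree s hsN]
    · intro h0
      refine measure_mono_null (?_ : σt ⁻¹' B ⊆ σ₀ ⁻¹' B ∪ N) (measure_union_null h0 hN0)
      intro s hs
      by_cases hsN : s ∈ N
      · exact Or.inr hsN
      · left
        show σ₀ s ∈ B
        rw [← hagree s hsN]
        exact hs
  have hmeasure : ∀ B : Set Ω, MeasurableSet B → (0 < μ B ↔ 0 < μ (σt ⁻¹' B)) := by
    intro B hB
    rw [pos_iff_ne_zero, pos_iff_ne_zero]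
    constructor
    · intro h1 h2
      exact h1 (hdir2 B hB ((hpre_eq B).mp h2))
    · intro h1 h2
      exact h1 ((hpre_eq B).mpr (hdir1 B hB h2))
  -- the nonvanishing coefficient
  set a : Ω → ℝ := fun s => if a₀ s = 0 then 1 else a₀ s with hadef
  have ha_meas : Measurable a :=
    Measurable.ite (ha₀ (measurableSet_singleton 0)) measurable_const ha₀
  have ha_ne' : ∀ s, a s ≠ 0 := by
    intro s
    rw [hadef]
    by_cases hs : a₀ s = 0
    · simp [hs]
    · simp [hs]
  refine ⟨hSel, a, σt, ha_meas, ha_ne', hσt_meas, ⟨σt', hσt'_meas, hinv1, hinv2⟩, hmeasure, ?_⟩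
  intro f hf
  have h1 := hrep f hf
  have hNae : ∀ᵐ s ∂μ, s ∉ N := by
    rw [ae_iff]
    simpa [not_not] using hN0
  filter_upwards [h1, ha_ne, hNae] with s hs1 hs2 hs3
  rw [hs1, hagree s hs3, hadef]
  simp [hs2]


end
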